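/- arXiv:1712.00150 — 2 statements merged into one kernel-verified Lean document; each statement's English description precedes it below -/
import Mathlib

section
/- Let t be a positive integer. There exists a (t,1) broadcast S ⊆ ℤ×ℤ whose density exists and equals 1/(2t² − 2t + 1); that is, lim_{n→∞} |S ∩ V_n|/(2n+1)² = 1/(2t² − 2t + 1), where V_n = {(a,b) ∈ ℤ×ℤ : |a| ≤ n, |b| ≤ n}. -/
open Filter Topology

/-- Graph (L¹) distance on the infinite grid ℤ×ℤ. -/
def gridDist (u v : ℤ × ℤ) : ℕ := (u.1 - v.1).natAbs + (u.2 - v.2).natAbs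

open Classical in
/-- Total signal received at `v` from towers of strength `t` located at the points of `S`:
the finite sum `∑_{T ∈ S, dist(v,T) < t} (t − dist(v,T))`. -/
noncomputable def totalSignal (t : ℕ) (S : Set (ℤ × ℤ)) (v : ℤ × ℤ) : ℕ :=
  ∑ T ∈ (Finset.Icc (v.1 - (t : ℤ)) (v.1 + (t : ℤ)) ×ˢ
      Finset.Icc (v.2 - (t : ℤ)) (v.2 + (t : ℤ))).filter
      (fun T => T ∈ S ∧ gridDist v T < t),
    (t - gridDist v T)

/-- `S` is a `(t,r)` broadcast if every vertex receives total signal at least `r`. -/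
def IsBroadcast (t r : ℕ) (S : Set (ℤ × ℤ)) : Prop :=
  ∀ v : ℤ × ℤ, r ≤ totalSignal t S v

/-- The standard pattern `T(d,e) = {(dx+ey, y) : x, y ∈ ℤ}`. -/
def stdPattern (d e : ℤ) : Set (ℤ × ℤ) := {p | ∃ x y : ℤ, p = (d * x + e * y, y)}

open Classical in
/-- The number of points of `S` in the square `V_n = {(a,b) : |a| ≤ n, |b| ≤ n}`. -/
noncomputable def gridCount (S : Set (ℤ × ℤ)) (n : ℕ) : ℕ :=
  ((Finset.Icc (-(n : ℤ)) (n : ℤ) ×ˢ Finset.Icc (-(n : ℤ)) (n : ℤ)).filter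
    (fun v => v ∈ S)).card

/-!
Let `d = 2t² - 2t + 1`, the number of points of an L¹ ball of radius `t - 1`. Every integer is
congruent mod `d` to `(2t - 1)δ + j` with `|δ| + |j| < t`: divide by `2t - 1` with a balanced
remainder and, if the pair leaves the ball, subtract one period `d`. Hence every vertex lies within
distance `t - 1` of the lattice `T(d, 2t - 1)`, and a tower there gives it signal at least `1`.
Each row of `V_n` meets `T(d, e)` in one residue class mod `d`, so it holds `(2n + 1)/d ± 1`
points of it, and the density is `1/d`.
-/

lemma sub_gridDist_le_totalSignal {t : ℕ} {S : Set (ℤ × ℤ)} {v T : ℤ × ℤ} (hT : T ∈ S) :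
    t - gridDist v T ≤ totalSignal t S v := by
  classical
  rcases le_or_gt t (gridDist v T) with h | h
  · simp [Nat.sub_eq_zero_of_le h]
  refine Finset.single_le_sum (f := fun T ↦ t - gridDist v T) (fun _ _ ↦ Nat.zero_le _) ?_
  simp only [Finset.mem_filter, Finset.mem_product, Finset.mem_Icc]
  exact ⟨by unfold gridDist at h; omega, hT, h⟩

lemma isBroadcast_one_of_forall_exists_gridDist_lt {t : ℕ} {S : Set (ℤ × ℤ)}
    (h : ∀ v, ∃ T ∈ S, gridDist v T < t) : IsBroadcast t 1 S := fun v ↦ by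
  obtain ⟨T, hT, hvT⟩ := h v
  have := sub_gridDist_le_totalSignal (t := t) (v := v) hT
  omega

lemma mem_stdPattern_iff {d e : ℤ} {v : ℤ × ℤ} : v ∈ stdPattern d e ↔ d ∣ v.1 - e * v.2 :=
  ⟨fun ⟨x, y, hv⟩ ↦ ⟨x, by simp [hv]⟩,
    fun ⟨x, hx⟩ ↦ ⟨x, v.2, Prod.ext (by simp; linarith) rfl⟩⟩

lemma exists_eq_mul_add_natAbs_lt (t : ℕ) (m : ℤ) (ht : 0 < t) (hm₀ : 0 ≤ m)
    (hm : m < 2 * t ^ 2 - 2 * t + 1) :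
    ∃ q j : ℤ, m = (2 * t - 1) * q + j ∧ 0 ≤ q ∧ q < t ∧ j.natAbs < t := by
  have he : (0 : ℤ) < 2 * t - 1 := by omega
  refine ⟨(m + t - 1) / (2 * t - 1), m - (2 * t - 1) * ((m + t - 1) / (2 * t - 1)),
    by ring, Int.ediv_nonneg (by omega) he.le, (Int.ediv_lt_iff_lt_mul he).2 (by linarith), ?_⟩
  have h₀ := Int.emod_nonneg (m + t - 1) he.ne'
  have h₁ := Int.emod_lt_of_pos (m + t - 1) he
  have h₂ := Int.mul_ediv_add_emod (m + t - 1) (2 * t - 1)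
  omega

lemma exists_natAbs_add_natAbs_lt_modEq (t : ℕ) (ht : 0 < t) (m : ℤ) :
    ∃ δ j : ℤ, δ.natAbs + j.natAbs < t ∧
      m ≡ (2 * t - 1) * δ + j [ZMOD 2 * t ^ 2 - 2 * t + 1] := by
  have hd : (0 : ℤ) < 2 * t ^ 2 - 2 * t + 1 := by nlinarith
  obtain ⟨q, j, hqj, hq₀, hq, hj⟩ := exists_eq_mul_add_natAbs_lt t (m % (2 * t ^ 2 - 2 * t + 1)) ht
    (Int.emod_nonneg _ hd.ne') (Int.emod_lt_of_pos _ hd)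
  have hm : m ≡ (2 * t - 1) * q + j [ZMOD 2 * t ^ 2 - 2 * t + 1] :=
    hqj ▸ (Int.mod_modEq _ _).symm
  by_cases hsmall : q.natAbs + j.natAbs < t
  · exact ⟨q, j, hsmall, hm⟩
  -- otherwise subtracting `2t² - 2t + 1 = (2t - 1)(t - 1) + t` moves `(q, j)` into the ball
  rcases le_or_gt 0 j with hj₀ | hj₀
  · exact ⟨q - t + 1, j - t, by omega, hm.trans (Int.modEq_iff_dvd.2 ⟨-1, by ring⟩)⟩
  · exact ⟨q - t, j + t - 1, by omega, hm.trans (Int.modEq_iff_dvd.2 ⟨-1, by ring⟩)⟩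

lemma exists_mem_stdPattern_gridDist_lt (t : ℕ) (ht : 0 < t) (v : ℤ × ℤ) :
    ∃ T ∈ stdPattern (2 * t ^ 2 - 2 * t + 1) (2 * t - 1), gridDist v T < t := by
  obtain ⟨δ, j, hδj, hm⟩ := exists_natAbs_add_natAbs_lt_modEq t ht (v.1 - (2 * t - 1) * v.2)
  refine ⟨(v.1 - j, v.2 + δ), mem_stdPattern_iff.2 ?_, ?_⟩
  · convert hm.symm.dvd using 1
    ring
  · simp only [gridDist]
    omega

theorem isBroadcast_stdPattern (t : ℕ) (ht : 0 < t) :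
    IsBroadcast t 1 (stdPattern (2 * t ^ 2 - 2 * t + 1) (2 * t - 1)) :=
  isBroadcast_one_of_forall_exists_gridDist_lt (exists_mem_stdPattern_gridDist_lt t ht)

open Finset

lemma abs_mul_card_filter_modEq_sub_lt (a b v : ℤ) {r : ℤ} (hab : a ≤ b) (hr : 0 < r) :
    |r * #{x ∈ Ioc a b | x ≡ v [ZMOD r]} - (b - a)| < r := by
  have hr' : (0 : ℚ) < r := by exact_mod_cast hr
  have hcard := Int.Ioc_filter_modEq_card a b hr v
  rw [max_eq_left (by have := Int.floor_mono (show ((a - v) / r : ℚ) ≤ (b - v) / r by gcongr); omega)]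
    at hcard
  set c : ℕ := #{x ∈ Ioc a b | x ≡ v [ZMOD r]}
  have hc : (c : ℚ) = ⌊((b - v) / r : ℚ)⌋ - ⌊((a - v) / r : ℚ)⌋ := by exact_mod_cast hcard
  have hdiff : ((b - v) / r : ℚ) - (a - v) / r = (b - a) / r := by ring
  have h₁ : (c : ℚ) < (b - a) / r + 1 := by
    linarith [Int.floor_le ((b - v) / r : ℚ), Int.lt_floor_add_one ((a - v) / r : ℚ)]
  have h₂ : (b - a) / r - 1 < (c : ℚ) := by
    linarith [Int.floor_le ((a - v) / r : ℚ), Int.lt_floor_add_one ((b - v) / r : ℚ)]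
  rw [div_add_one hr'.ne', lt_div_iff₀' hr'] at h₁
  rw [div_sub_one hr'.ne', div_lt_iff₀' hr'] at h₂
  have h₁' : r * c < b - a + r := by exact_mod_cast h₁
  have h₂' : b - a - r < r * c := by exact_mod_cast h₂
  rw [abs_sub_lt_iff]
  constructor <;> linarith

lemma card_Icc_neg_self (n : ℕ) : #(Icc (-(n : ℤ)) n) = 2 * n + 1 := by
  rw [Int.card_Icc]
  omega

open Classical in
lemma gridCount_eq_sum_card_row (S : Set (ℤ × ℤ)) (n : ℕ) :
    gridCount S n = ∑ y ∈ Icc (-(n : ℤ)) n, #{x ∈ Icc (-(n : ℤ)) n | (x, y) ∈ S} := by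
  simp only [gridCount, card_filter, sum_product_right]

open Classical in
lemma abs_mul_card_row_stdPattern_sub_lt {d : ℤ} (e y : ℤ) (n : ℕ) (hd : 0 < d) :
    |d * #{x ∈ Icc (-(n : ℤ)) n | (x, y) ∈ stdPattern d e} - (2 * n + 1)| < d := by
  have h := abs_mul_card_filter_modEq_sub_lt (-n - 1) n (e * y) (by omega) hd
  rw [Ioc_sub_one_left_eq_Icc] at h
  convert h using 5
  · exact congrArg card <| filter_congr fun x _ ↦ by
      rw [mem_stdPattern_iff, Int.modEq_comm, Int.modEq_iff_dvd]
  · ring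

open Classical in
lemma abs_mul_gridCount_stdPattern_sub_le {d : ℤ} (e : ℤ) (n : ℕ) (hd : 0 < d) :
    |d * gridCount (stdPattern d e) n - (2 * n + 1) ^ 2| ≤ d * (2 * n + 1) := by
  have hrows : (d * gridCount (stdPattern d e) n - (2 * n + 1) ^ 2 : ℤ) =
      ∑ y ∈ Icc (-(n : ℤ)) n,
        (d * #{x ∈ Icc (-(n : ℤ)) n | (x, y) ∈ stdPattern d e} - (2 * n + 1)) := by
    rw [gridCount_eq_sum_card_row, sum_sub_distrib, ← mul_sum, sum_const, card_Icc_neg_self]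
    push_cast
    ring
  calc _ ≤ ∑ y ∈ Icc (-(n : ℤ)) n,
        |d * #{x ∈ Icc (-(n : ℤ)) n | (x, y) ∈ stdPattern d e} - (2 * n + 1)| :=
        hrows ▸ abs_sum_le_sum_abs _ _
    _ ≤ ∑ y ∈ Icc (-(n : ℤ)) n, d :=
        sum_le_sum fun y _ ↦ (abs_mul_card_row_stdPattern_sub_lt e y n hd).le
    _ = d * (2 * n + 1) := by
        rw [sum_const, card_Icc_neg_self, nsmul_eq_mul]
        push_cast
        ring

lemma tendsto_div_sq_of_abs_mul_sub_le {c : ℕ → ℝ} {d : ℝ} (hd : 0 < d)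
    (h : ∀ n : ℕ, |d * c n - (2 * n + 1) ^ 2| ≤ d * (2 * n + 1)) :
    Tendsto (fun n : ℕ ↦ c n / (2 * n + 1) ^ 2) atTop (𝓝 (1 / d)) := by
  rw [tendsto_iff_dist_tendsto_zero]
  refine squeeze_zero (fun _ ↦ dist_nonneg) (fun n ↦ ?_) tendsto_one_div_add_atTop_nhds_zero_nat
  have hN : (0 : ℝ) < 2 * n + 1 := by positivity
  have hden : 0 < d * (2 * n + 1) ^ 2 := by positivity
  have hdist : c n / (2 * n + 1) ^ 2 - 1 / d =
      (d * c n - (2 * n + 1) ^ 2) / (d * (2 * n + 1) ^ 2) := by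
    field_simp
  rw [Real.dist_eq, hdist, abs_div, abs_of_pos hden, div_le_div_iff₀ hden (by positivity)]
  nlinarith [h n, mul_nonneg (mul_nonneg hd.le hN.le) (n.cast_nonneg : (0 : ℝ) ≤ n)]

lemma tendsto_gridCount_stdPattern {d : ℤ} (e : ℤ) (hd : 0 < d) :
    Tendsto (fun n : ℕ ↦ (gridCount (stdPattern d e) n : ℝ) / (2 * n + 1) ^ 2) atTop
      (𝓝 (1 / (d : ℝ))) :=
  tendsto_div_sq_of_abs_mul_sub_le (by exact_mod_cast hd) fun n ↦ by
    exact_mod_cast abs_mul_gridCount_stdPattern_sub_le e n hd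

theorem stmt4 (t : ℕ) (ht : 0 < t) :
    ∃ S : Set (ℤ × ℤ), IsBroadcast t 1 S ∧
      Filter.Tendsto (fun n : ℕ => (gridCount S n : ℝ) / (2 * n + 1) ^ 2)
        Filter.atTop (nhds (1 / (2 * (t : ℝ) ^ 2 - 2 * (t : ℝ) + 1))) := by
  refine ⟨_, isBroadcast_stdPattern t ht, ?_⟩
  have hd : (0 : ℤ) < 2 * t ^ 2 - 2 * t + 1 := by nlinarith
  simpa using tendsto_gridCount_stdPattern (2 * t - 1) hd
end

section
/- The standard pattern T(8,3) = {(8x+3y, y) : x, y ∈ ℤ} is a (3,2) broadcast on the infinite grid; that is, for every vertex v ∈ ℤ×ℤ, the total signal received at v from towers of strength 3 located at the points of T(8,3) is at least 2. -/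
open Filter Topology

/-!
Write `v = (8q + 3b + r, b)` with `0 ≤ r < 8`. Row `b + k` of `T(8,3)` is the coset `3k + 8ℤ`,
so for `r ∈ {0, 1, 3, 5, 7}` some tower lies within distance `1` of `v` and alone sends signal `≥ 2`,
while for `r ∈ {2, 4, 6}` there are two towers, in different rows, at distance `2`, each sending `1`.
-/

section Signal

variable {t : ℕ} {S : Set (ℤ × ℤ)} {v : ℤ × ℤ}

open Classical in
theorem sum_le_totalSignal {F : Finset (ℤ × ℤ)} (hFS : ∀ T ∈ F, T ∈ S)
    (hF : ∀ T ∈ F, gridDist v T < t) :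
    ∑ T ∈ F, (t - gridDist v T) ≤ totalSignal t S v := by
  refine Finset.sum_le_sum_of_subset fun T hT => ?_
  have hdist := hF T hT
  simp only [gridDist] at hdist
  simp only [Finset.mem_filter, Finset.mem_product, Finset.mem_Icc]
  refine ⟨⟨⟨?_, ?_⟩, ?_, ?_⟩, hFS T hT, hF T hT⟩ <;> omega

theorem le_totalSignal_of_mem {T : ℤ × ℤ} (hT : T ∈ S) (h : gridDist v T < t) :
    t - gridDist v T ≤ totalSignal t S v := by
  simpa using sum_le_totalSignal (F := {T}) (by simpa) (by simpa)

theorem add_le_totalSignal_of_mem {T₁ T₂ : ℤ × ℤ} (hne : T₁ ≠ T₂) (hT₁ : T₁ ∈ S) (hT₂ : T₂ ∈ S)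
    (h₁ : gridDist v T₁ < t) (h₂ : gridDist v T₂ < t) :
    (t - gridDist v T₁) + (t - gridDist v T₂) ≤ totalSignal t S v := by
  rw [← Finset.sum_pair (f := fun T => t - gridDist v T) hne]
  exact sum_le_totalSignal (by simp [hT₁, hT₂]) (by simp [h₁, h₂])

end Signal

section StdPattern

variable {d e : ℤ} {v : ℤ × ℤ}

theorem mk_mem_stdPattern (d e x y : ℤ) : (d * x + e * y, y) ∈ stdPattern d e :=
  ⟨x, y, rfl⟩

theorem two_le_totalSignal_of_gridDist_le_one (x y : ℤ)
    (h : gridDist v (d * x + e * y, y) ≤ 1) : 2 ≤ totalSignal 3 (stdPattern d e) v :=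
  le_trans (by omega) (le_totalSignal_of_mem (mk_mem_stdPattern d e x y) (by omega))

theorem two_le_totalSignal_of_gridDist_le_two (x₁ y₁ x₂ y₂ : ℤ) (hne : y₁ ≠ y₂)
    (h₁ : gridDist v (d * x₁ + e * y₁, y₁) ≤ 2) (h₂ : gridDist v (d * x₂ + e * y₂, y₂) ≤ 2) :
    2 ≤ totalSignal 3 (stdPattern d e) v :=
  le_trans (by omega) (add_le_totalSignal_of_mem (by simp [hne])
    (mk_mem_stdPattern d e x₁ y₁) (mk_mem_stdPattern d e x₂ y₂) (by omega) (by omega))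

end StdPattern

theorem stmt14 : IsBroadcast 3 2 (stdPattern 8 3) := by
  rintro ⟨a, b⟩
  obtain ⟨q, r, hr0, hr8, ha⟩ : ∃ q r : ℤ, 0 ≤ r ∧ r < 8 ∧ a = 8 * q + 3 * b + r :=
    ⟨(a - 3 * b) / 8, (a - 3 * b) % 8, by omega, by omega, by omega⟩
  interval_cases r
  · exact two_le_totalSignal_of_gridDist_le_one q b (by dsimp only [gridDist]; omega)
  · exact two_le_totalSignal_of_gridDist_le_one q b (by dsimp only [gridDist]; omega)
  · exact two_le_totalSignal_of_gridDist_le_two q b (q + 1) (b - 2) (by omega)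
      (by dsimp only [gridDist]; omega) (by dsimp only [gridDist]; omega)
  · exact two_le_totalSignal_of_gridDist_le_one q (b + 1) (by dsimp only [gridDist]; omega)
  · exact two_le_totalSignal_of_gridDist_le_two q (b + 1) (q + 1) (b - 1) (by omega)
      (by dsimp only [gridDist]; omega) (by dsimp only [gridDist]; omega)
  · exact two_le_totalSignal_of_gridDist_le_one (q + 1) (b - 1) (by dsimp only [gridDist]; omega)
  · exact two_le_totalSignal_of_gridDist_le_two (q + 1) b q (b + 2) (by omega)
      (by dsimp only [gridDist]; omega) (by dsimp only [gridDist]; omega)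
  · exact two_le_totalSignal_of_gridDist_le_one (q + 1) b (by dsimp only [gridDist]; omega)
end
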